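/- For every integer p ≥ 2, the function v₂(τ) = (1+τ)^{p+2}(1−τ)^{p−2}·I₋(τ) satisfies (1−τ²)·v₂''(τ) + (−4 + 2(p−1)τ)·v₂'(τ) + 2p·v₂(τ) = 0 for all τ ∈ (−1,1); i.e. it is a second, linearly independent solution of the homogeneous a₄-equation in the sector q = p. -/

import Mathlib

/-! The first solution `v₁ = (1+τ)^(p+2) (1-τ)^(p-2)` has logarithmic derivative
`(p+2)/(1+τ) - (p-2)/(1-τ)`, and a direct computation shows that it solves the equation.
The integrand of `I₋` is `1 / ((1-τ²) v₁)`, so `v₂ = v₁ I₋` is the reduction-of-order solution: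
`v₂' = v₁' I₋ + 1/(1-τ²)`, and in `L v₂` the terms carrying `I₋` add up to `I₋ · L v₁ = 0` while
the remaining rational terms cancel. -/

open intervalIntegral

/-- The integral `I₋(τ) = ∫₀^τ (1−s)^{−(p−1)} (1+s)^{−(p+3)} ds`. -/
noncomputable def Iminus (p : ℕ) (τ : ℝ) : ℝ :=
  ∫ s in (0 : ℝ)..τ, 1 / ((1 - s) ^ (p - 1) * (1 + s) ^ (p + 3))

open Filter Topology Set

theorem HasDerivAt.pow_mul_logDeriv {f : ℝ → ℝ} {f' x : ℝ} (hf : HasDerivAt f f' x) (hx : f x ≠ 0)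
    (n : ℕ) : HasDerivAt (fun y => f y ^ n) (f x ^ n * (n * f' / f x)) x := by
  refine (hf.pow n).congr_deriv ?_
  cases n with
  | zero => simp
  | succ n => rw [Nat.add_sub_cancel]; field_simp; ring

noncomputable section

/-- The operator of the homogeneous `a₄`-equation in the sector `q = p`. -/
def transportOp (p : ℕ) (y : ℝ → ℝ) (τ : ℝ) : ℝ :=
  (1 - τ ^ 2) * deriv (deriv y) τ + (-4 + 2 * ((p : ℝ) - 1) * τ) * deriv y τ + 2 * p * y τ

def v₁ (p : ℕ) (t : ℝ) : ℝ := (1 + t) ^ (p + 2) * (1 - t) ^ (p - 2)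

def v₂ (p : ℕ) (t : ℝ) : ℝ := v₁ p t * Iminus p t

def logDerivV₁ (p : ℕ) (t : ℝ) : ℝ := (p + 2) / (1 + t) - (p - 2) / (1 - t)

variable {p : ℕ} {t τ : ℝ}

lemma one_add_pos_of_mem_Ioo (ht : t ∈ Ioo (-1 : ℝ) 1) : 0 < 1 + t := by linarith [ht.1]

lemma one_sub_pos_of_mem_Ioo (ht : t ∈ Ioo (-1 : ℝ) 1) : 0 < 1 - t := by linarith [ht.2]

lemma one_sub_sq_pos_of_mem_Ioo (ht : t ∈ Ioo (-1 : ℝ) 1) : 0 < 1 - t ^ 2 := by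
  nlinarith [one_add_pos_of_mem_Ioo ht, one_sub_pos_of_mem_Ioo ht]

lemma hasDerivAt_v₁ (hp : 2 ≤ p) (ht : t ∈ Ioo (-1 : ℝ) 1) :
    HasDerivAt (v₁ p) (v₁ p t * logDerivV₁ p t) t := by
  have hplus := one_add_pos_of_mem_Ioo ht
  have hminus := one_sub_pos_of_mem_Ioo ht
  have hd := (((hasDerivAt_id t).const_add 1).pow_mul_logDeriv hplus.ne' (p + 2)).mul
    (((hasDerivAt_id t).const_sub 1).pow_mul_logDeriv hminus.ne' (p - 2))
  refine hd.congr_deriv ?_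
  simp only [v₁, logDerivV₁, id, Nat.cast_add, Nat.cast_sub hp, Nat.cast_ofNat]
  ring

lemma hasDerivAt_logDerivV₁ (ht : t ∈ Ioo (-1 : ℝ) 1) :
    HasDerivAt (logDerivV₁ p) (-(p + 2) / (1 + t) ^ 2 - (p - 2) / (1 - t) ^ 2) t := by
  have hplus := one_add_pos_of_mem_Ioo ht
  have hminus := one_sub_pos_of_mem_Ioo ht
  have hd := (((hasDerivAt_id t).const_add 1).inv hplus.ne').const_mul ((p : ℝ) + 2) |>.sub
    ((((hasDerivAt_id t).const_sub 1).inv hminus.ne').const_mul ((p : ℝ) - 2))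
  refine hd.congr_deriv ?_ |>.congr_of_eventuallyEq ?_
  · simp only [id]; field_simp
  · exact Eventually.of_forall fun s => by simp [logDerivV₁, div_eq_mul_inv]

lemma deriv_v₁_eventuallyEq (hp : 2 ≤ p) (hτ : τ ∈ Ioo (-1 : ℝ) 1) :
    deriv (v₁ p) =ᶠ[𝓝 τ] fun t => v₁ p t * logDerivV₁ p t := by
  filter_upwards [isOpen_Ioo.mem_nhds hτ] with t ht
  exact (hasDerivAt_v₁ hp ht).deriv

lemma hasDerivAt_deriv_v₁ (hp : 2 ≤ p) (hτ : τ ∈ Ioo (-1 : ℝ) 1) :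
    HasDerivAt (deriv (v₁ p))
      (v₁ p τ * (logDerivV₁ p τ ^ 2 + (-(p + 2) / (1 + τ) ^ 2 - (p - 2) / (1 - τ) ^ 2))) τ := by
  refine (((hasDerivAt_v₁ hp hτ).mul (hasDerivAt_logDerivV₁ hτ)).congr_deriv ?_).congr_of_eventuallyEq
    (deriv_v₁_eventuallyEq hp hτ)
  ring

theorem transportOp_v₁ (hp : 2 ≤ p) (hτ : τ ∈ Ioo (-1 : ℝ) 1) : transportOp p (v₁ p) τ = 0 := by
  have hplus := one_add_pos_of_mem_Ioo hτ
  have hminus := one_sub_pos_of_mem_Ioo hτ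
  rw [transportOp, (hasDerivAt_deriv_v₁ hp hτ).deriv, (hasDerivAt_v₁ hp hτ).deriv, logDerivV₁]
  field_simp
  ring

lemma hasDerivAt_Iminus (hτ : τ ∈ Ioo (-1 : ℝ) 1) :
    HasDerivAt (Iminus p) (1 / ((1 - τ) ^ (p - 1) * (1 + τ) ^ (p + 3))) τ := by
  have hcont : ContinuousOn (fun s : ℝ => 1 / ((1 - s) ^ (p - 1) * (1 + s) ^ (p + 3)))
      (Ioo (-1) 1) := by
    refine continuousOn_const.div (by fun_prop) fun s hs => ?_
    have := one_add_pos_of_mem_Ioo hs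
    have := one_sub_pos_of_mem_Ioo hs
    positivity
  have hsub : uIcc 0 τ ⊆ Ioo (-1 : ℝ) 1 :=
    ordConnected_Ioo.uIcc_subset (by norm_num) hτ
  exact integral_hasDerivAt_right ((hcont.mono hsub).intervalIntegrable)
    (hcont.stronglyMeasurableAtFilter isOpen_Ioo τ hτ) (hcont.continuousAt (isOpen_Ioo.mem_nhds hτ))

lemma v₁_mul_deriv_Iminus (hp : 2 ≤ p) (ht : t ∈ Ioo (-1 : ℝ) 1) :
    v₁ p t * (1 / ((1 - t) ^ (p - 1) * (1 + t) ^ (p + 3))) = (1 - t ^ 2)⁻¹ := by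
  have hplus := one_add_pos_of_mem_Ioo ht
  have hminus := one_sub_pos_of_mem_Ioo ht
  obtain ⟨m, rfl⟩ := Nat.exists_eq_add_of_le' hp
  have hsq := one_sub_sq_pos_of_mem_Ioo ht
  simp only [v₁, Nat.add_sub_cancel, show m + 2 - 1 = m + 1 by omega]
  field_simp
  ring

lemma hasDerivAt_v₂ (hp : 2 ≤ p) (ht : t ∈ Ioo (-1 : ℝ) 1) :
    HasDerivAt (v₂ p) (deriv (v₁ p) t * Iminus p t + (1 - t ^ 2)⁻¹) t := by
  refine ((hasDerivAt_v₁ hp ht).differentiableAt.hasDerivAt.mul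
    (hasDerivAt_Iminus ht)).congr_deriv ?_
  rw [v₁_mul_deriv_Iminus hp ht]

lemma hasDerivAt_deriv_v₂ (hp : 2 ≤ p) (hτ : τ ∈ Ioo (-1 : ℝ) 1) :
    HasDerivAt (deriv (v₂ p))
      (deriv (deriv (v₁ p)) τ * Iminus p τ
        + deriv (v₁ p) τ * (1 / ((1 - τ) ^ (p - 1) * (1 + τ) ^ (p + 3)))
        + 2 * τ / (1 - τ ^ 2) ^ 2) τ := by
  have hsq := one_sub_sq_pos_of_mem_Ioo hτ
  have hderiv : deriv (v₂ p) =ᶠ[𝓝 τ] fun t => deriv (v₁ p) t * Iminus p t + (1 - t ^ 2)⁻¹ := by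
    filter_upwards [isOpen_Ioo.mem_nhds hτ] with t ht
    exact (hasDerivAt_v₂ hp ht).deriv
  refine ((((hasDerivAt_deriv_v₁ hp hτ).differentiableAt.hasDerivAt.mul
    (hasDerivAt_Iminus hτ)).add (((hasDerivAt_pow 2 τ).const_sub 1).inv hsq.ne')).congr_deriv ?_)
    |>.congr_of_eventuallyEq hderiv
  field_simp
  ring

theorem transportOp_v₂ (hp : 2 ≤ p) (hτ : τ ∈ Ioo (-1 : ℝ) 1) : transportOp p (v₂ p) τ = 0 := by
  have hplus := one_add_pos_of_mem_Ioo hτ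
  have hminus := one_sub_pos_of_mem_Ioo hτ
  have hv₁ := transportOp_v₁ hp hτ
  rw [transportOp] at hv₁ ⊢
  have hw : deriv (v₁ p) τ * (1 / ((1 - τ) ^ (p - 1) * (1 + τ) ^ (p + 3)))
      = logDerivV₁ p τ * (1 - τ ^ 2)⁻¹ := by
    rw [(hasDerivAt_v₁ hp hτ).deriv, mul_right_comm, v₁_mul_deriv_Iminus hp hτ, mul_comm]
  have hrest : (1 - τ ^ 2) * (logDerivV₁ p τ * (1 - τ ^ 2)⁻¹ + 2 * τ / (1 - τ ^ 2) ^ 2)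
      + (-4 + 2 * ((p : ℝ) - 1) * τ) * (1 - τ ^ 2)⁻¹ = 0 := by
    have hsq := one_sub_sq_pos_of_mem_Ioo hτ
    rw [logDerivV₁]
    field_simp
    ring
  rw [(hasDerivAt_deriv_v₂ hp hτ).deriv, (hasDerivAt_v₂ hp hτ).deriv, hw]
  simp only [v₂]
  linear_combination Iminus p τ * hv₁ + hrest

end

theorem stmt_3 (p : ℕ) (hp : 2 ≤ p) :
    ∀ τ ∈ Set.Ioo (-1 : ℝ) 1,
      (1 - τ ^ 2) *
          deriv (deriv (fun t : ℝ => (1 + t) ^ (p + 2) * (1 - t) ^ (p - 2) * Iminus p t)) τ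
        + (-4 + 2 * ((p : ℝ) - 1) * τ) *
            deriv (fun t : ℝ => (1 + t) ^ (p + 2) * (1 - t) ^ (p - 2) * Iminus p t) τ
        + 2 * (p : ℝ) * ((1 + τ) ^ (p + 2) * (1 - τ) ^ (p - 2) * Iminus p τ) = 0 :=
  fun _ hτ => transportOp_v₂ hp hτ
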